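/- Gross-Pitaevskii violation of momentum conservation by the third moment (Appendix B): let σ₀ > 0, x₀, p₀ ∈ ℝ and define φ : ℝ → ℂ by φ(x) = (π σ₀²)^{−1/4} exp(−(x−x₀)²/(2σ₀²)) · exp(i p₀ x²). Then Im ∫_ℝ conj(φ(x)) · |φ(x)|² · (i φ'''(x)) dx = −6 p₀² x₀ / √(2π σ₀²). Via d/dt⟨aⁿ⟩ = −2λ Im⟨φ| |φ|² aⁿ |φ⟩ this gives d/dt⟨φ| p³ |φ⟩ = 12 λ p₀² x₀ / √(2π σ₀²), so the third momentum moment is also time-dependent in Gross-Pitaevskii theory. -/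

import Mathlib

/-!
Write `φ = c · exp q` with `q` quadratic. Then `φ''' = (q'³ + 3 q'' q') φ`, so the integrand
`φ̄ |φ|² (i φ''')` equals `|φ|⁴ · i (q'³ + 3 q'' q')`: a Gaussian centred at `x₀` times a cubic
polynomial. After centring at `x₀` the odd moments vanish, and the even ones are
`∫ e^{-b w²} = √(π/b)` and `∫ w² e^{-b w²} = √(π/b) / (2b)`.
-/

open Real Complex MeasureTheory

theorem integrable_pow_mul_exp_neg_mul_sq {b : ℝ} (hb : 0 < b) (k : ℕ) :
    Integrable fun x : ℝ => x ^ k * Real.exp (-b * x ^ 2) := by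
  simpa using integrable_rpow_mul_exp_neg_mul_sq hb (s := k) (by linarith [k.cast_nonneg (α := ℝ)])

theorem integral_pow_mul_exp_neg_mul_sq_of_odd (b : ℝ) {k : ℕ} (hk : Odd k) :
    ∫ x : ℝ, x ^ k * Real.exp (-b * x ^ 2) = 0 := by
  have h := integral_neg_eq_self (fun x : ℝ => x ^ k * Real.exp (-b * x ^ 2)) volume
  simp only [hk.neg_pow, neg_sq, neg_mul (_ ^ k), integral_neg] at h
  linarith

theorem integral_sq_mul_exp_neg_mul_sq {b : ℝ} (hb : 0 < b) :
    ∫ x : ℝ, x ^ 2 * Real.exp (-b * x ^ 2) = √(π / b) / (2 * b) := by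
  have hderiv (x : ℝ) : HasDerivAt (fun x => x * Real.exp (-b * x ^ 2))
      (Real.exp (-b * x ^ 2) - 2 * b * (x ^ 2 * Real.exp (-b * x ^ 2))) x := by
    refine ((hasDerivAt_id' x).mul ((hasDerivAt_pow 2 x).const_mul (-b)).exp).congr_deriv ?_
    push_cast
    ring
  have hsq := (integrable_pow_mul_exp_neg_mul_sq hb 2).const_mul (2 * b)
  have h := integral_eq_zero_of_hasDerivAt_of_integrable hderiv
    ((integrable_exp_neg_mul_sq hb).sub hsq) (integrable_mul_exp_neg_mul_sq hb)
  rw [integral_sub (integrable_exp_neg_mul_sq hb) hsq, integral_const_mul, integral_gaussian] at h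
  rw [eq_div_iff (by positivity)]
  linarith

theorem integral_exp_neg_mul_sq_mul_cubic {b : ℝ} (hb : 0 < b) (A₀ A₁ A₂ A₃ : ℂ) :
    ∫ x : ℝ, (Real.exp (-b * x ^ 2) : ℂ) * (A₀ + A₁ * x + A₂ * x ^ 2 + A₃ * x ^ 3)
      = (A₀ + A₂ / (2 * b)) * √(π / b) := by
  set M : ℕ → ℝ → ℂ := fun k x => ((x ^ k * Real.exp (-b * x ^ 2) : ℝ) : ℂ)
  have hM (k : ℕ) (A : ℂ) : Integrable fun x => A * M k x :=
    (integrable_pow_mul_exp_neg_mul_sq hb k).ofReal.const_mul A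
  have hM' (k : ℕ) (A : ℂ) :
      ∫ x, A * M k x = A * (∫ x : ℝ, x ^ k * Real.exp (-b * x ^ 2) : ℝ) := by
    rw [integral_const_mul, integral_complex_ofReal]
  calc _ = ∫ x, A₀ * M 0 x + A₁ * M 1 x + A₂ * M 2 x + A₃ * M 3 x := by
        congr 1; ext x; simp only [M]; push_cast; ring
    _ = _ := by
      rw [integral_add (by exact ((hM 0 _).add (hM 1 _)).add (hM 2 _)) (hM 3 _),
        integral_add (by exact (hM 0 _).add (hM 1 _)) (hM 2 _), integral_add (hM 0 _) (hM 1 _),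
        hM', hM', hM', hM', integral_pow_mul_exp_neg_mul_sq_of_odd b odd_one,
        integral_pow_mul_exp_neg_mul_sq_of_odd b (by decide : Odd 3),
        integral_sq_mul_exp_neg_mul_sq hb]
      simp only [pow_zero, one_mul, integral_gaussian]
      push_cast
      field_simp
      ring

theorem integral_exp_neg_mul_sq_mul_cube_add {b : ℝ} (hb : 0 < b) (a v : ℂ) :
    ∫ x : ℝ, (Real.exp (-b * x ^ 2) : ℂ) * ((a * x + v) ^ 3 + 3 * a * (a * x + v))
      = (v ^ 3 + 3 * a * v + 3 * a ^ 2 * v / (2 * b)) * √(π / b) := by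
  rw [← integral_exp_neg_mul_sq_mul_cubic hb _ (3 * a * v ^ 2 + 3 * a ^ 2) _ (a ^ 3)]
  congr 1; ext x; ring

theorem deriv_deriv_deriv_const_mul_cexp {q q' : ℝ → ℂ} {a : ℂ} (c : ℂ)
    (hq : ∀ x, HasDerivAt q (q' x) x) (hq' : ∀ x, HasDerivAt q' a x) :
    deriv (deriv (deriv fun x => c * cexp (q x)))
      = fun x => (q' x ^ 3 + 3 * a * q' x) * (c * cexp (q x)) := by
  have hf (x : ℝ) : HasDerivAt (fun x => c * cexp (q x)) (q' x * (c * cexp (q x))) x :=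
    ((hq x).cexp.const_mul c).congr_deriv (by ring)
  have h1 : deriv (fun x => c * cexp (q x)) = fun x => q' x * (c * cexp (q x)) :=
    funext fun x => (hf x).deriv
  have h2 : deriv (fun x => q' x * (c * cexp (q x)))
      = fun x => (a + q' x ^ 2) * (c * cexp (q x)) :=
    funext fun x => ((hq' x).mul (hf x)).deriv.trans (by ring)
  rw [h1, h2]
  funext x
  exact ((((hq' x).pow 2).const_add a).mul (hf x)).deriv.trans
    (by simp only [Pi.pow_apply]; push_cast; ring)

theorem conj_mul_norm_sq_mul_mul_self (z w : ℂ) :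
    starRingEnd ℂ z * (‖z‖ : ℂ) ^ 2 * (w * z) = ((‖z‖ ^ 4 : ℝ) : ℂ) * w := by
  push_cast
  linear_combination (w * (‖z‖ : ℂ) ^ 2) * conj_mul' z

section ChirpedGaussian

variable {σ₀ x₀ p₀ : ℝ}

noncomputable def chirpPhase (σ₀ x₀ p₀ x : ℝ) : ℂ :=
  -((x - x₀ : ℝ) : ℂ) ^ 2 / (2 * (σ₀ : ℂ) ^ 2) + I * p₀ * x ^ 2

noncomputable def chirpCurvature (σ₀ p₀ : ℝ) : ℂ :=
  -1 / σ₀ ^ 2 + 2 * I * p₀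

theorem hasDerivAt_chirpPhase (x : ℝ) :
    HasDerivAt (chirpPhase σ₀ x₀ p₀)
      (chirpCurvature σ₀ p₀ * (x - x₀ : ℝ) + 2 * I * p₀ * x₀) x := by
  have hsq := ((hasDerivAt_id' x).sub_const x₀).ofReal_comp.pow 2
  refine ((hsq.neg.div_const (2 * (σ₀ : ℂ) ^ 2)).add
    ((hasDerivAt_id' x).ofReal_comp.pow 2 |>.const_mul (I * p₀))).congr_deriv ?_
  rw [chirpCurvature]
  push_cast
  ring

theorem re_chirpPhase (x : ℝ) :
    (chirpPhase σ₀ x₀ p₀ x).re = -(x - x₀) ^ 2 / (2 * σ₀ ^ 2) := by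
  have h : chirpPhase σ₀ x₀ p₀ x
      = ((-(x - x₀) ^ 2 / (2 * σ₀ ^ 2) : ℝ) : ℂ) + ((p₀ * x ^ 2 : ℝ) : ℂ) * I := by
    rw [chirpPhase]; push_cast; ring
  rw [h, add_re, ofReal_re, mul_I_re, ofReal_im, neg_zero, add_zero]

variable {c : ℝ} {φ : ℝ → ℂ}

theorem norm_pow_four_of_eq_chirpPhase (hφ : ∀ x, φ x = c * cexp (chirpPhase σ₀ x₀ p₀ x))
    (hc : 0 ≤ c) (x : ℝ) :
    ‖φ x‖ ^ 4 = c ^ 4 * Real.exp (-(2 / σ₀ ^ 2) * (x - x₀) ^ 2) := by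
  rw [hφ, norm_mul, norm_exp, re_chirpPhase, norm_real, norm_of_nonneg hc, mul_pow,
    ← Real.exp_nat_mul]
  congr 2
  ring

theorem deriv_deriv_deriv_of_eq_chirpPhase (hφ : ∀ x, φ x = c * cexp (chirpPhase σ₀ x₀ p₀ x))
    (x : ℝ) :
    deriv (deriv (deriv φ)) x
      = ((chirpCurvature σ₀ p₀ * (x - x₀ : ℝ) + 2 * I * p₀ * x₀) ^ 3
        + 3 * chirpCurvature σ₀ p₀ * (chirpCurvature σ₀ p₀ * (x - x₀ : ℝ) + 2 * I * p₀ * x₀))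
        * φ x := by
  have hlin (x : ℝ) :
      HasDerivAt (fun x : ℝ => chirpCurvature σ₀ p₀ * (x - x₀ : ℝ) + 2 * I * p₀ * x₀)
        (chirpCurvature σ₀ p₀) x :=
    ((((hasDerivAt_id' x).sub_const x₀).ofReal_comp.const_mul _).add_const _).congr_deriv
      (mul_one _)
  rw [funext hφ, deriv_deriv_deriv_const_mul_cexp _ hasDerivAt_chirpPhase hlin]

theorem conj_mul_norm_sq_mul_I_mul_deriv_three_add
    (hφ : ∀ x, φ x = c * cexp (chirpPhase σ₀ x₀ p₀ x)) (hc : 0 ≤ c) (w : ℝ) :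
    starRingEnd ℂ (φ (w + x₀)) * (‖φ (w + x₀)‖ : ℂ) ^ 2 * (I * deriv (deriv (deriv φ)) (w + x₀))
      = ((c ^ 4 : ℝ) : ℂ) * I * ((Real.exp (-(2 / σ₀ ^ 2) * w ^ 2) : ℂ)
        * ((chirpCurvature σ₀ p₀ * w + 2 * I * p₀ * x₀) ^ 3
          + 3 * chirpCurvature σ₀ p₀ * (chirpCurvature σ₀ p₀ * w + 2 * I * p₀ * x₀))) := by
  rw [deriv_deriv_deriv_of_eq_chirpPhase hφ, ← mul_assoc I, conj_mul_norm_sq_mul_mul_self,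
    norm_pow_four_of_eq_chirpPhase hφ hc, add_sub_cancel_right]
  push_cast
  ring

end ChirpedGaussian

theorem re_chirp_cubic_gaussian_average (σ₀ x₀ p₀ : ℝ) (hσ : σ₀ ≠ 0) :
    ((2 * I * p₀ * x₀) ^ 3 + 3 * chirpCurvature σ₀ p₀ * (2 * I * p₀ * x₀)
      + 3 * chirpCurvature σ₀ p₀ ^ 2 * (2 * I * p₀ * x₀) / (2 * ((2 / σ₀ ^ 2 : ℝ) : ℂ))).re
      = -6 * p₀ ^ 2 * x₀ := by
  have ha : chirpCurvature σ₀ p₀ = ((-1 / σ₀ ^ 2 : ℝ) : ℂ) + ((2 * p₀ : ℝ) : ℂ) * I := by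
    rw [chirpCurvature]; push_cast; ring
  have hv : 2 * I * p₀ * x₀ = ((2 * p₀ * x₀ : ℝ) : ℂ) * I := by push_cast; ring
  rw [ha, hv, show (2 * ((2 / σ₀ ^ 2 : ℝ) : ℂ)) = ((2 * (2 / σ₀ ^ 2) : ℝ) : ℂ) by push_cast; rfl]
  simp only [pow_succ, pow_zero, one_mul, add_re, div_ofReal_re, re_ofNat, im_ofNat,
    mul_re, mul_im, add_im, ofReal_re, ofReal_im, I_re, I_im]
  field_simp
  ring

theorem gaussian_normalization_pow_four_mul_sqrt (σ₀ : ℝ) (hσ : σ₀ ≠ 0) :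
    ((π * σ₀ ^ 2) ^ (-(1 / 4 : ℝ))) ^ 4 * √(π / (2 / σ₀ ^ 2)) = (√(2 * π * σ₀ ^ 2))⁻¹ := by
  have ht : 0 < π * σ₀ ^ 2 := by positivity
  refine eq_inv_of_mul_eq_one_left ?_
  rw [← Real.rpow_natCast, ← Real.rpow_mul ht.le, mul_assoc, ← Real.sqrt_mul (by positivity),
    show π / (2 / σ₀ ^ 2) * (2 * π * σ₀ ^ 2) = (π * σ₀ ^ 2) ^ 2 by field_simp,
    Real.sqrt_sq ht.le, show -(1 / 4 : ℝ) * (4 : ℕ) = -1 by norm_num, Real.rpow_neg_one,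
    inv_mul_cancel₀ ht.ne']

/-- **Gross-Pitaevskii violation of momentum conservation by the third moment
(Appendix B).** For the momentum-chirped Gaussian orbital,
`Im ⟪φ, |φ|² p³ φ⟫ = -6 p₀² x₀ / √(2π σ₀²)` with `(p³ φ)(x) = i φ'''(x)`, so that
`d/dt ⟨φ| p³ |φ⟩ = 12 λ p₀² x₀ / √(2π σ₀²)` in Gross-Pitaevskii theory. -/
theorem gp_violation_momentum_cubed
    (σ₀ x₀ p₀ : ℝ) (hσ : 0 < σ₀) (φ : ℝ → ℂ)
    (hφ : ∀ x : ℝ, φ x =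
      (((π * σ₀ ^ 2) ^ (-(1 / 4 : ℝ)) : ℝ) : ℂ)
        * Complex.exp (-((x - x₀ : ℝ) : ℂ) ^ 2 / (2 * (σ₀ : ℂ) ^ 2))
        * Complex.exp (Complex.I * (p₀ : ℂ) * (x : ℂ) ^ 2)) :
    (∫ x : ℝ, (starRingEnd ℂ) (φ x) * (‖φ x‖ ^ 2 : ℂ)
        * (Complex.I * deriv (deriv (deriv φ)) x)).im
      = -(6 * p₀ ^ 2 * x₀) / Real.sqrt (2 * π * σ₀ ^ 2) := by
  have hc : 0 ≤ (π * σ₀ ^ 2) ^ (-(1 / 4 : ℝ)) := by positivity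
  have hφ' (x : ℝ) :
      φ x = ((π * σ₀ ^ 2) ^ (-(1 / 4 : ℝ)) : ℝ) * cexp (chirpPhase σ₀ x₀ p₀ x) := by
    rw [hφ, mul_assoc, ← Complex.exp_add]; rfl
  rw [← integral_add_right_eq_self _ x₀, integral_congr_ae (.of_forall
      (conj_mul_norm_sq_mul_I_mul_deriv_three_add hφ' hc)), integral_const_mul,
    integral_exp_neg_mul_sq_mul_cube_add (by positivity)]
  simp only [mul_im, mul_re, ofReal_re, ofReal_im, I_re, I_im,
    re_chirp_cubic_gaussian_average σ₀ x₀ p₀ hσ.ne']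
  linear_combination (-6 * p₀ ^ 2 * x₀) * gaussian_normalization_pow_four_mul_sqrt σ₀ hσ.ne'
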